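/- arXiv:1604.01041 — 6 statements merged into one kernel-verified Lean document; each statement's English description precedes it below -/
import Mathlib

section
/- Let a₀ ∈ {0,…,9}, and for Y = 10^k define F_Y(θ) = (1/9^k)·|Σ_{n<Y, n has no digit a₀} e(nθ)|. Then for any powers of ten U = 10^u and V = 10^v, F_{UV}(θ) = F_U(θ)·F_V(Uθ) for all real θ. -/
/-- `e(x) = exp(2πix)`. -/
noncomputable def e (x : ℝ) : ℂ := Complex.exp (2 * Real.pi * Complex.I * x)

/-- The normalized Fourier transform `F_{10^k}(θ)` of the integers below `10^k`
all of whose `k` base-10 digits (leading zeros allowed) differ from `a₀`. -/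
noncomputable def F (a₀ k : ℕ) (θ : ℝ) : ℝ :=
  (1 / 9^k : ℝ) *
    ‖(∑ n ∈ (Finset.range (10^k)).filter (fun n => ∀ i < k, n / 10^i % 10 ≠ a₀),
      e ((n : ℝ) * θ))‖

/-!
Writing an integer below `10^(u+v)` as `m + 10^u * n` with `m < 10^u` and `n < 10^v` splits its
digits into the `u` digits of `m` and the `v` digits of `n`, so the digit-restricted set is the
image of a product of two such sets. Since `e((m + 10^u n)θ) = e(mθ) e(n · 10^u θ)`, the
exponential sum factors, and so does its normalized absolute value.
-/

lemma e_add (x y : ℝ) : e (x + y) = e x * e y := by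
  rw [e, e, e, ← Complex.exp_add]
  push_cast
  ring_nf

namespace Nat

def digit (b i n : ℕ) : ℕ := n / b ^ i % b

def digitAvoiding (b a k : ℕ) : Finset ℕ :=
  (Finset.range (b ^ k)).filter fun n => ∀ i < k, digit b i n ≠ a

variable {b : ℕ}

lemma digit_add_pow_mul_of_lt (hb : 0 < b) (m n : ℕ) {u i : ℕ} (hi : i < u) :
    digit b i (m + b ^ u * n) = digit b i m := by
  have hu : b ^ u = b ^ (u - i - 1) * b * b ^ i := by
    rw [← pow_succ, ← pow_add]; congr 1; omega
  rw [digit, digit, hu, show b ^ (u - i - 1) * b * b ^ i * n = (b ^ (u - i - 1) * n * b) * b ^ i by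
    ring, Nat.add_mul_div_right _ _ (by positivity), Nat.add_mul_mod_self_right]

lemma digit_add_pow_mul_add {m u : ℕ} (hm : m < b ^ u) (n j : ℕ) :
    digit b (u + j) (m + b ^ u * n) = digit b j n := by
  have hpos : 0 < b ^ u := by omega
  rw [digit, digit, pow_add, ← Nat.div_div_eq_div_mul, Nat.add_mul_div_left _ _ hpos,
    Nat.div_eq_of_lt hm, Nat.zero_add]

lemma add_pow_mul_mem_digitAvoiding_add_iff (hb : 0 < b) (a : ℕ) {u v m : ℕ} (hm : m < b ^ u)
    (n : ℕ) :
    m + b ^ u * n ∈ digitAvoiding b a (u + v) ↔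
      m ∈ digitAvoiding b a u ∧ n ∈ digitAvoiding b a v := by
  have hquot : (m + b ^ u * n) / b ^ u = n := by
    rw [Nat.add_mul_div_left _ _ (by positivity), Nat.div_eq_of_lt hm, Nat.zero_add]
  have hrange : m + b ^ u * n < b ^ (u + v) ↔ n < b ^ v := by
    rw [pow_add, mul_comm (b ^ u) (b ^ v), ← Nat.div_lt_iff_lt_mul (by positivity), hquot]
  simp only [digitAvoiding, Finset.mem_filter, Finset.mem_range, hm, hrange, true_and]
  constructor
  · rintro ⟨hn, hdigits⟩
    refine ⟨fun i hi => ?_, hn, fun j hj => ?_⟩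
    · rw [← digit_add_pow_mul_of_lt hb m n hi]; exact hdigits i (by omega)
    · rw [← digit_add_pow_mul_add hm]; exact hdigits (u + j) (by omega)
  · rintro ⟨hlow, hn, hhigh⟩
    refine ⟨hn, fun i hi => ?_⟩
    rcases lt_or_ge i u with hiu | hui
    · rw [digit_add_pow_mul_of_lt hb m n hiu]; exact hlow i hiu
    · obtain ⟨j, rfl⟩ := Nat.exists_eq_add_of_le hui
      rw [digit_add_pow_mul_add hm]; exact hhigh j (by omega)

lemma sum_digitAvoiding_add {M : Type*} [AddCommMonoid M] (hb : 0 < b) (a u v : ℕ)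
    (f : ℕ → M) :
    ∑ n ∈ digitAvoiding b a (u + v), f n =
      ∑ m ∈ digitAvoiding b a u, ∑ n ∈ digitAvoiding b a v, f (m + b ^ u * n) := by
  have hlt : ∀ m ∈ digitAvoiding b a u, m < b ^ u := fun m hm =>
    Finset.mem_range.mp (Finset.mem_filter.mp hm).1
  rw [← Finset.sum_product']
  refine Finset.sum_nbij' (fun n => (n % b ^ u, n / b ^ u)) (fun p => p.1 + b ^ u * p.2)
    ?_ ?_ (fun n _ => Nat.mod_add_div n (b ^ u)) ?_ (fun n _ => by rw [Nat.mod_add_div])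
  · intro n hn
    have hmod : n % b ^ u < b ^ u := Nat.mod_lt _ (by positivity)
    rw [← Nat.mod_add_div n (b ^ u), add_pow_mul_mem_digitAvoiding_add_iff hb a hmod] at hn
    exact Finset.mem_product.mpr hn
  · rintro ⟨m, n⟩ hmn
    obtain ⟨hm, hn⟩ := Finset.mem_product.mp hmn
    exact (add_pow_mul_mem_digitAvoiding_add_iff hb a (hlt m hm) n).mpr ⟨hm, hn⟩
  · rintro ⟨m, n⟩ hmn
    have hm := hlt m (Finset.mem_product.mp hmn).1
    simp only [Nat.add_mul_mod_self_left, Nat.mod_eq_of_lt hm,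
      Nat.add_mul_div_left _ _ (show 0 < b ^ u by positivity), Nat.div_eq_of_lt hm, zero_add]

end Nat

lemma F_eq_digitAvoiding (a₀ k : ℕ) (θ : ℝ) :
    F a₀ k θ = (1 / 9 ^ k : ℝ) * ‖∑ n ∈ Nat.digitAvoiding 10 a₀ k, e ((n : ℝ) * θ)‖ :=
  rfl

theorem stmt_2_general (a₀ : ℕ) (u v : ℕ) (θ : ℝ) :
    F a₀ (u + v) θ = F a₀ u θ * F a₀ v ((10^u : ℝ) * θ) := by
  have hsum : ∑ n ∈ Nat.digitAvoiding 10 a₀ (u + v), e ((n : ℝ) * θ) =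
      (∑ m ∈ Nat.digitAvoiding 10 a₀ u, e ((m : ℝ) * θ)) *
        ∑ n ∈ Nat.digitAvoiding 10 a₀ v, e ((n : ℝ) * ((10 ^ u : ℝ) * θ)) := by
    rw [Nat.sum_digitAvoiding_add (by norm_num), Finset.sum_mul_sum]
    refine Finset.sum_congr rfl fun m _ => Finset.sum_congr rfl fun n _ => ?_
    rw [← e_add]
    push_cast
    ring_nf
  rw [F_eq_digitAvoiding, F_eq_digitAvoiding, F_eq_digitAvoiding, hsum, norm_mul, pow_add]
  ring

theorem stmt_2 (a₀ : ℕ) (ha : a₀ ≤ 9) (u v : ℕ) (θ : ℝ) :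
    F a₀ (u + v) θ = F a₀ u θ * F a₀ v ((10^u : ℝ) * θ) :=
  stmt_2_general a₀ u v θ
end

section
/- Let t be a real number with ‖10^i t‖ ≥ 1/(2q) for all integers 0 ≤ i ≤ k, where q ≥ 1. Then for any interval I ⊆ [0, k] of length at least log q / log 10 + 1, there exists an integer i ∈ I with ‖10^i t‖ > 1/200. -/
/-!
If `‖10^i t‖ ≤ 1/200` throughout `[a, b]`, then multiplying by `10` never wraps around an
integer, so `‖10^b t‖ = 10^(b-a) ‖10^a t‖ ≥ 10^(b-a) / (2q) ≥ 5`, which is absurd since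
`‖10^b t‖ ≤ 1/200`. The length condition on `[a, b]` is exactly `10 q ≤ 10^(b-a)`.
-/

/-- Distance from a real number to the nearest integer. -/
noncomputable def nint (θ : ℝ) : ℝ := ⨅ m : ℤ, |θ - (m : ℝ)|

lemma nint_le (θ : ℝ) (m : ℤ) : nint θ ≤ |θ - m| :=
  ciInf_le ⟨0, by rintro _ ⟨j, rfl⟩; positivity⟩ m

lemma le_nint {θ c : ℝ} (h : ∀ m : ℤ, c ≤ |θ - m|) : c ≤ nint θ :=
  le_ciInf h

lemma nint_eq_abs_sub_round (θ : ℝ) : nint θ = |θ - round θ| :=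
  le_antisymm (nint_le θ _) (le_nint (round_le θ))

lemma nint_natCast_mul (n : ℕ) (x : ℝ) (h : n * nint x ≤ 1 / 2) :
    nint (n * x) = n * nint x := by
  rw [nint_eq_abs_sub_round x] at h ⊢
  set m := round x
  have hnm : |n * x - ((n * m : ℤ) : ℝ)| = n * |x - m| := by
    push_cast
    rw [← mul_sub, abs_mul, Nat.abs_cast]
  refine le_antisymm (hnm ▸ nint_le _ _) (le_nint fun j => ?_)
  rcases eq_or_ne j (n * m) with rfl | hj
  · exact hnm.ge
  · -- any other integer is at distance `≥ 1` from `n m`, hence `≥ 1/2` from `n x`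
    have hone : (1 : ℝ) ≤ |((n * m : ℤ) : ℝ) - j| := by
      rw [← Int.cast_sub, ← Int.cast_abs]
      exact_mod_cast Int.one_le_abs (sub_ne_zero.mpr hj.symm)
    have := abs_sub_abs_le_abs_sub (((n * m : ℤ) : ℝ) - j) (((n * m : ℤ) : ℝ) - n * x)
    rw [abs_sub_comm _ (n * x), hnm, sub_sub_sub_cancel_left] at this
    linarith

lemma nint_pow_mul (c n : ℕ) (x : ℝ) (h : ∀ j < n, c * nint (c ^ j * x) ≤ 1 / 2) :
    nint (c ^ n * x) = c ^ n * nint x := by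
  induction n with
  | zero => simp
  | succ n ih =>
    rw [pow_succ', mul_assoc, nint_natCast_mul c _ (h n n.lt_succ_self),
      ih fun j hj => h j (hj.trans n.lt_succ_self), mul_assoc]

lemma mul_le_pow_of_logb_add_one_le {c q : ℝ} {n : ℕ} (hc : 1 < c) (hq : 0 < q)
    (h : Real.logb c q + 1 ≤ n) : c * q ≤ c ^ n := by
  have hle : q ≤ c ^ ((n : ℝ) - 1) := (Real.logb_le_iff_le_rpow hc hq).1 (by linarith)
  rw [Real.rpow_sub_one (by positivity), Real.rpow_natCast,
    le_div_iff₀ (by positivity)] at hle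
  linarith

theorem stmt_4 (t q : ℝ) (hq : 1 ≤ q) (k : ℕ)
    (h : ∀ i ≤ k, 1 / (2 * q) ≤ nint (10^i * t))
    (a b : ℕ) (hab : a ≤ b) (hbk : b ≤ k)
    (hlen : Real.log q / Real.log 10 + 1 ≤ (b : ℝ) - (a : ℝ)) :
    ∃ i : ℕ, a ≤ i ∧ i ≤ b ∧ 1 / 200 < nint (10^i * t) := by
  by_contra! hsmall
  have hq0 : 0 < q := by linarith
  have hpow : 10 * q ≤ 10 ^ (b - a) := mul_le_pow_of_logb_add_one_le (by norm_num) hq0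
    (by rwa [← Real.log_div_log, Nat.cast_sub hab])
  have hscale : nint (10 ^ b * t) = 10 ^ (b - a) * nint (10 ^ a * t) := by
    have hstep : ∀ j < b - a, (10 : ℕ) * nint ((10 : ℕ) ^ j * (10 ^ a * t)) ≤ 1 / 2 := by
      intro j hj
      have := hsmall (a + j) (Nat.le_add_right a j) (by omega)
      rw [pow_add, mul_comm _ (10 ^ j), mul_assoc] at this
      push_cast
      linarith
    have := nint_pow_mul 10 (b - a) (10 ^ a * t) hstep
    push_cast at this
    rwa [← mul_assoc, ← pow_add, Nat.sub_add_cancel hab] at this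
  have hfive : 5 ≤ 10 ^ (b - a) * nint (10 ^ a * t) :=
    calc (5 : ℝ) = 10 * q * (1 / (2 * q)) := by field_simp; norm_num
      _ ≤ 10 ^ (b - a) * nint (10 ^ a * t) := by
        gcongr
        exact h a (hab.trans hbk)
  linarith [hsmall b hab le_rfl]
end

section
/- Geometry of numbers lemma: There is an absolute constant K₀ such that the following holds. Let t ∈ ℝ³ with ‖t‖₂ = 1, let N > 1 > δ > 0, and let R = { v ∈ ℝ³ : ‖v‖₂ ≤ N, |v·t| ≤ δ }. If #(R ∩ ℤ³) ≥ δKN² for some K > K₀, then there exists a sublattice Λ ⊆ ℤ³ of rank at most 2 with #(Λ ∩ R) ≫ δKN², i.e. #(Λ ∩ R) ≥ c·δKN² for an absolute constant c > 0. -/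
/-!
If the integer points of `R = {v : ‖v‖ ≤ N, |⟪v, t⟫| ≤ δ}` span a real subspace of dimension at
most two, the sublattice they generate has rank at most two and contains all of them. Otherwise
`R` contains three independent integer vectors; they generate a sublattice `L` of index
`|det| = vol P`, where `P ⊆ 3R` is their half-open fundamental parallelepiped. Integer points of
`R` in one coset of `L` differ by points of `L ∩ 2R`, and the translates of `P` by `L ∩ 2R` are
disjoint and lie in `5R`, so `#(ℤ³ ∩ R) ≤ vol P · #(L ∩ 2R) ≤ vol 5R ≤ 1000 δ N²`; hence
`K₀ = 1000` and `c = 1` work.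
-/

/-- Euclidean norm on `ℝ³` (as `Fin 3 → ℝ`). -/
noncomputable def enorm3 (v : Fin 3 → ℝ) : ℝ := Real.sqrt (∑ i, (v i)^2)

/-- Standard inner product on `ℝ³`. -/
def dot3 (v w : Fin 3 → ℝ) : ℝ := ∑ i, v i * w i

/-- Coercion of an integer vector to a real vector. -/
def zc (v : Fin 3 → ℤ) : Fin 3 → ℝ := fun i => (v i : ℝ)

open MeasureTheory Module Submodule ZSpan
open scoped Pointwise ENNReal

theorem Submodule.ncard_le_natCard_quotient_mul_ncard {R M : Type*} [Ring R] [AddCommGroup M]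
    [Module R M] (N : Submodule R M) [Finite (M ⧸ N)] {s : Set M} (hs : s.Finite) :
    s.ncard ≤ Nat.card (M ⧸ N) * ((s - s) ∩ N).ncard := by
  classical
  have fiber : ∀ q ∈ hs.toFinset.image N.mkQ,
      {u ∈ hs.toFinset | N.mkQ u = q}.card ≤ ((s - s) ∩ N).ncard := by
    intro q hq
    obtain ⟨u₀, hu₀, rfl⟩ := Finset.mem_image.mp hq
    rw [← Set.ncard_coe_finset]
    refine Set.ncard_le_ncard_of_injOn (· - u₀) ?_ sub_left_injective.injOn
      ((hs.sub hs).inter_of_left _)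
    intro u hu
    simp only [Finset.coe_filter, Set.Finite.mem_toFinset] at hu hu₀
    exact ⟨Set.sub_mem_sub hu.1 hu₀, (Submodule.Quotient.eq N).mp hu.2⟩
  calc s.ncard = hs.toFinset.card := Set.ncard_eq_toFinset_card s hs
    _ ≤ ((s - s) ∩ N).ncard * (hs.toFinset.image N.mkQ).card :=
      Finset.card_le_mul_card_image _ _ fiber
    _ ≤ Nat.card (M ⧸ N) * ((s - s) ∩ N).ncard := by
      rw [mul_comm, ← Set.ncard_coe_finset]
      exact Nat.mul_le_mul_right _ (Set.ncard_le_card _)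

theorem ZSpan.ncard_mul_measure_fundamentalDomain {E ι : Type*} [NormedAddCommGroup E]
    [NormedSpace ℝ E] [MeasurableSpace E] [BorelSpace E] [Finite ι] (b : Basis ι ℝ E)
    (μ : Measure E) [μ.IsAddLeftInvariant] {W : Set E} (hW : W.Finite)
    (hWL : W ⊆ span ℤ (Set.range b)) :
    W.ncard * μ (fundamentalDomain b) = μ (W + fundamentalDomain b) := by
  have hdisj : (hW.toFinset : Set E).PairwiseDisjoint (· +ᵥ fundamentalDomain b) := by
    intro w hw w' hw' hne
    rw [Set.Finite.coe_toFinset] at hw hw'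
    refine Set.disjoint_left.mpr fun x hx hx' ↦ hne ?_
    rw [Set.mem_vadd_set_iff_neg_vadd_mem] at hx hx'
    obtain ⟨g, -, hg⟩ := exist_unique_vadd_mem_fundamentalDomain b x
    have h := (hg ⟨-w, neg_mem (hWL hw)⟩ hx).trans (hg ⟨-w', neg_mem (hWL hw')⟩ hx').symm
    simpa using congrArg Subtype.val h
  have hunion : W + fundamentalDomain b = ⋃ w ∈ hW.toFinset, w +ᵥ fundamentalDomain b := by
    simp_rw [Set.Finite.mem_toFinset]
    exact Set.iUnion_add_left_image.symm
  rw [hunion, measure_biUnion_finset hdisj fun w _ ↦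
    (fundamentalDomain_measurableSet b).const_vadd w]
  simp_rw [measure_vadd, Finset.sum_const, nsmul_eq_mul, Set.ncard_eq_toFinset_card W hW]

theorem natCard_quotient_span_eq_natAbs_det {ι : Type*} [Fintype ι] [DecidableEq ι]
    {v : ι → ι → ℤ} (hv : LinearIndependent ℤ v) :
    Nat.card ((ι → ℤ) ⧸ span ℤ (Set.range v)) = (Matrix.of v).det.natAbs := by
  rw [← natAbs_det_basis_change (Pi.basisFun ℤ ι) _ (Basis.span hv), ← Pi.basisFun_det_apply]
  have : (↑) ∘ Basis.span hv = v := funext fun i ↦ by simp [Basis.span_apply]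
  rw [this]

theorem Convex.sum_mem_card_smul {E ι : Type*} [AddCommGroup E] [Module ℝ E] {K : Set E}
    (hK : Convex ℝ K) (h0 : 0 ∈ K) (s : Finset ι) {z : ι → E} (hz : ∀ i ∈ s, z i ∈ K) :
    ∑ i ∈ s, z i ∈ (s.card : ℝ) • K := by
  classical
  induction s using Finset.induction_on with
  | empty => simpa using Set.zero_mem_smul_set h0
  | insert a s ha ih =>
    rw [Finset.sum_insert ha, Finset.card_insert_of_notMem ha, Nat.cast_succ,
      hK.add_smul s.card.cast_nonneg zero_le_one, one_smul, add_comm (z a)]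
    exact Set.add_mem_add (ih fun i hi ↦ hz i (Finset.mem_insert_of_mem hi))
      (hz a (Finset.mem_insert_self a s))

theorem ZSpan.fundamentalDomain_subset_card_smul {E ι : Type*} [NormedAddCommGroup E]
    [NormedSpace ℝ E] [Fintype ι] (b : Basis ι ℝ E) {K : Set E} (hK : Convex ℝ K) (h0 : 0 ∈ K)
    (hb : ∀ i, b i ∈ K) : fundamentalDomain b ⊆ (Fintype.card ι : ℝ) • K := by
  intro x hx
  rw [mem_fundamentalDomain] at hx
  rw [← b.sum_repr x]
  exact hK.sum_mem_card_smul h0 _ fun i _ ↦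
    hK.smul_mem_of_zero_mem h0 (hb i) ⟨(hx i).1, (hx i).2.le⟩

theorem ncard_intPoints_le_of_linearIndependent {ι : Type*} [Fintype ι] {K : Set (ι → ℝ)}
    (hK : Convex ℝ K) (hK_neg : ∀ x ∈ K, -x ∈ K) {v : ι → ι → ℤ} (hv : LinearIndependent ℤ v)
    (hvK : ∀ i, Int.cast ∘ v i ∈ K) :
    ({u : ι → ℤ | Int.cast ∘ u ∈ K}.ncard : ℝ≥0∞) ≤
      ENNReal.ofReal ((Fintype.card ι + 2) ^ Fintype.card ι) * volume K := by
  classical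
  set S := {u : ι → ℤ | Int.cast ∘ u ∈ K}
  rcases S.finite_or_infinite with hS | hS
  swap
  · simp [hS.ncard]
  rcases S.eq_empty_or_nonempty with hS₀ | ⟨u, hu⟩
  · simp [hS₀]
  have h0 : (0 : ι → ℝ) ∈ K := by
    simpa using hK hu (hK_neg _ hu) (by norm_num : (0 : ℝ) ≤ 1 / 2)
      (by norm_num : (0 : ℝ) ≤ 1 / 2) (by norm_num)
  let cast : (ι → ℤ) →ₗ[ℤ] ι → ℝ := (Int.castAddHom ℝ).toIntLinearMap.compLeft ι
  have hcast : Function.Injective cast := fun x y h ↦ funext fun i ↦ by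
    simpa [cast] using congrFun h i
  have hvℝ : LinearIndependent ℝ (cast ∘ v) := by
    have h : cast ∘ v = fun i ↦ algebraMap ℤ ℝ ∘ v i := by ext; simp [cast]
    exact h ▸ linearIndependent_algebraMap_comp_iff.mpr hv
  let b : Basis ι ℝ (ι → ℝ) := basisOfLinearIndependentOfCardEqFinrank' (cast ∘ v)
    hvℝ (finrank_fintype_fun_eq_card ℝ).symm
  have hb : ⇑b = cast ∘ v := coe_basisOfLinearIndependentOfCardEqFinrank' ..
  let N := span ℤ (Set.range v)
  have hindex : (Nat.card ((ι → ℤ) ⧸ N) : ℝ≥0∞) = volume (fundamentalDomain b) := by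
    have : Matrix.of (cast ∘ v) = (Matrix.of v).map (Int.cast : ℤ → ℝ) := by ext; simp [cast]
    rw [volume_fundamentalDomain, hb, this, ← Int.cast_det, natCard_quotient_span_eq_natAbs_det hv,
      ← ENNReal.ofReal_natCast, Nat.cast_natAbs, Int.cast_abs]
  have : Finite ((ι → ℤ) ⧸ N) := Nat.finite_of_card_ne_zero <| by
    exact_mod_cast hindex.trans_ne (measure_fundamentalDomain_ne_zero b)
  let W := cast '' ((S - S) ∩ N)
  have hWL : W ⊆ span ℤ (Set.range b) := by
    rintro _ ⟨x, ⟨-, hx⟩, rfl⟩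
    rw [hb, Set.range_comp, span_image]
    exact mem_map_of_mem hx
  have hW2K : W ⊆ (2 : ℝ) • K := by
    rintro _ ⟨_, ⟨⟨x, hx, y, hy, rfl⟩, -⟩, rfl⟩
    rw [one_add_one_eq_two.symm, hK.add_smul zero_le_one zero_le_one, one_smul, map_sub,
      sub_eq_add_neg]
    exact Set.add_mem_add hx (hK_neg _ hy)
  have hWD : W + fundamentalDomain b ⊆ (Fintype.card ι + 2 : ℝ) • K := by
    rw [add_comm (Fintype.card ι : ℝ), hK.add_smul zero_le_two (Nat.cast_nonneg _)]
    exact Set.add_subset_add hW2K (fundamentalDomain_subset_card_smul b hK h0 fun i ↦ hb ▸ hvK i)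
  calc (S.ncard : ℝ≥0∞) ≤ Nat.card ((ι → ℤ) ⧸ N) * ((S - S) ∩ N).ncard := by
        exact_mod_cast N.ncard_le_natCard_quotient_mul_ncard hS
    _ = W.ncard * volume (fundamentalDomain b) := by
        rw [hindex, Set.ncard_image_of_injective _ hcast, mul_comm]
    _ = volume (W + fundamentalDomain b) :=
        ncard_mul_measure_fundamentalDomain b volume (((hS.sub hS).inter_of_left _).image _) hWL
    _ ≤ volume ((Fintype.card ι + 2 : ℝ) • K) := measure_mono hWD
    _ = _ := by
        rw [Measure.addHaar_smul, finrank_fintype_fun_eq_card, abs_of_nonneg (by positivity)]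

section BallSlab

open RealInnerProductSpace

variable {E : Type*} [NormedAddCommGroup E] [InnerProductSpace ℝ E]

def ballSlab (t : E) (r a : ℝ) : Set E := {x | ‖x‖ ≤ r ∧ |⟪x, t⟫| ≤ a}

theorem convex_ballSlab (t : E) (r a : ℝ) : Convex ℝ (ballSlab t r a) := by
  have : ballSlab t r a = Metric.closedBall 0 r ∩ innerSL ℝ t ⁻¹' Set.Icc (-a) a := by
    ext x
    simp [ballSlab, abs_le, real_inner_comm]
  rw [this]
  exact (convex_closedBall 0 r).inter ((convex_Icc _ _).linear_preimage (innerSL ℝ t).toLinearMap)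

theorem neg_mem_ballSlab {t x : E} {r a : ℝ} (hx : x ∈ ballSlab t r a) :
    -x ∈ ballSlab t r a := by
  simpa [ballSlab] using hx

theorem volume_ballSlab_le [FiniteDimensional ℝ E] [MeasurableSpace E] [BorelSpace E] {t : E}
    (ht : ‖t‖ = 1) (r a : ℝ) :
    volume (ballSlab t r a) ≤
      ENNReal.ofReal (2 * a) * ENNReal.ofReal (2 * r) ^ (finrank ℝ E - 1) := by
  classical
  obtain ⟨u, b, htu, hb⟩ := Orthonormal.exists_orthonormalBasis_extension (𝕜 := ℝ) (v := {t})
    (orthonormal_subsingleton_iff.mpr fun i ↦ by rw [i.2]; exact ht)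
  let i₀ : u := ⟨t, htu rfl⟩
  let c : u → ℝ := fun i ↦ if i = i₀ then a else r
  have hsub : ballSlab t r a ⊆ (fun x ↦ WithLp.ofLp (b.repr x)) ⁻¹' Set.Icc (-c) c := by
    intro x ⟨hxr, hxa⟩
    suffices h : ∀ i, |b.repr x i| ≤ c i from
      ⟨fun i ↦ (abs_le.mp (h i)).1, fun i ↦ (abs_le.mp (h i)).2⟩
    intro i
    rw [b.repr_apply_apply, hb]
    by_cases hi : i = i₀
    · simpa [c, hi, i₀, real_inner_comm] using hxa
    · simp only [c, hi, if_false]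
      calc |⟪(i : E), x⟫| ≤ ‖(i : E)‖ * ‖x‖ := abs_real_inner_le_norm _ _
        _ = ‖x‖ := by rw [← hb, b.orthonormal.1 i, one_mul]
        _ ≤ r := hxr
  have hmp : MeasurePreserving (fun x ↦ WithLp.ofLp (b.repr x)) :=
    (PiLp.volume_preserving_ofLp u).comp b.measurePreserving_repr
  calc volume (ballSlab t r a)
      ≤ volume ((fun x ↦ WithLp.ofLp (b.repr x)) ⁻¹' Set.Icc (-c) c) := measure_mono hsub
    _ = ∏ i, ENNReal.ofReal (c i - -c i) := by
      rw [hmp.measure_preimage measurableSet_Icc.nullMeasurableSet, Real.volume_Icc_pi]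
      rfl
    _ = _ := by
      rw [Fintype.prod_eq_mul_prod_compl i₀, Finset.prod_congr rfl
        (g := fun _ ↦ ENNReal.ofReal (2 * r)), Finset.prod_const, Finset.card_compl,
        Finset.card_singleton, finrank_eq_card_basis b.toBasis]
      · simp [c, two_mul]
      · intro i hi
        simp [c, Finset.notMem_singleton.mp (Finset.mem_compl.mp hi), two_mul]

end BallSlab

open RealInnerProductSpace in
theorem ncard_intPoints_ballSlab_le {ι : Type*} [Fintype ι] {t : EuclideanSpace ℝ ι}
    (ht : ‖t‖ = 1) {r a : ℝ} (hr : 0 ≤ r) (ha : 0 ≤ a) {v : ι → ι → ℤ}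
    (hv : LinearIndependent ℤ v) (hvK : ∀ i, WithLp.toLp 2 (Int.cast ∘ v i) ∈ ballSlab t r a) :
    ({u : ι → ℤ | WithLp.toLp 2 (Int.cast ∘ u) ∈ ballSlab t r a}.ncard : ℝ) ≤
      (Fintype.card ι + 2) ^ Fintype.card ι * (2 * a * (2 * r) ^ (Fintype.card ι - 1)) := by
  set K : Set (ι → ℝ) := WithLp.toLp 2 ⁻¹' ballSlab t r a
  have hK : Convex ℝ K :=
    (convex_ballSlab t r a).linear_preimage (WithLp.linearEquiv 2 ℝ (ι → ℝ)).symm.toLinearMap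
  have hK_neg : ∀ x ∈ K, -x ∈ K := fun x hx ↦ by
    simpa [K, WithLp.toLp_neg] using neg_mem_ballSlab hx
  have hvol : volume K = volume (ballSlab t r a) :=
    (EuclideanSpace.volume_preserving_symm_measurableEquiv_toLp ι).symm.measure_preimage_equiv _
  have h := (ncard_intPoints_le_of_linearIndependent hK hK_neg hv hvK).trans
    (mul_le_mul_right (hvol ▸ volume_ballSlab_le ht r a) _)
  rwa [finrank_euclideanSpace, ← ENNReal.ofReal_pow (by positivity),
    ← ENNReal.ofReal_mul (by positivity), ← ENNReal.ofReal_mul (by positivity),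
    ← ENNReal.ofReal_natCast, ENNReal.ofReal_le_ofReal_iff (by positivity)] at h

theorem exists_linearIndependent_of_card_le_finrank_span {ι κ : Type*} [Finite ι] [Fintype κ]
    {S : Set (ι → ℤ)} (h : Fintype.card κ ≤ Set.finrank ℝ ((Int.cast ∘ ·) '' S : Set (ι → ℝ))) :
    ∃ v : κ → ι → ℤ, (∀ i, v i ∈ S) ∧ LinearIndependent ℤ v := by
  obtain ⟨B, hBS, hspan, hli⟩ := exists_linearIndependent ℝ ((Int.cast ∘ ·) '' S : Set (ι → ℝ))
  have : Fintype B := hli.setFinite.fintype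
  rw [Set.finrank, ← hspan, finrank_span_set_eq_card hli, Set.toFinset_card] at h
  obtain ⟨f⟩ := Function.Embedding.nonempty_of_card_le h
  choose v hvS hv using fun i ↦ hBS (f i).2
  refine ⟨v, hvS, ?_⟩
  rw [← linearIndependent_algebraMap_comp_iff (S := ℝ)]
  have : (fun i ↦ algebraMap ℤ ℝ ∘ v i) = Subtype.val ∘ f := funext hv
  exact this ▸ hli.comp f f.injective

theorem exists_subset_span_of_finrank_span_le {ι : Type*} [Finite ι] {S : Set (ι → ℤ)} {k : ℕ}
    (h : Set.finrank ℝ ((Int.cast ∘ ·) '' S : Set (ι → ℝ)) ≤ k) :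
    ∃ w : Fin k → ι → ℤ, S ⊆ span ℤ (Set.range w) := by
  let Λ := span ℤ S
  obtain ⟨m, bb⟩ := Λ.basisOfPid (Pi.basisFun ℤ ι)
  have hli : LinearIndependent ℝ fun j ↦ algebraMap ℤ ℝ ∘ (bb j : ι → ℤ) :=
    linearIndependent_algebraMap_comp_iff.mpr (bb.linearIndependent.map' Λ.subtype Λ.ker_subtype)
  have hmem : ∀ j, algebraMap ℤ ℝ ∘ (bb j : ι → ℤ) ∈
      span ℝ ((Int.cast ∘ ·) '' S : Set (ι → ℝ)) := by
    intro j
    let castL : (ι → ℤ) →ₗ[ℤ] ι → ℝ := (Int.castAddHom ℝ).toIntLinearMap.compLeft ι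
    have h : castL (bb j) ∈ span ℤ (castL '' S) := by
      rw [← map_span]
      exact mem_map_of_mem (bb j).2
    exact span_le_restrictScalars ℤ ℝ _ h
  have hm : m ≤ k := by
    have := linearIndependent_iff_card_le_finrank_span.mp hli
    rw [Fintype.card_fin] at this
    exact this.trans <|
      (Submodule.finrank_mono (span_le.mpr (Set.range_subset_iff.mpr hmem))).trans h
  have hΛ : span ℤ (Set.range (Λ.subtype ∘ bb)) = Λ := by
    rw [Set.range_comp, ← map_span, bb.span_eq, map_subtype_top]
  refine ⟨fun j ↦ if hj : (j : ℕ) < m then bb ⟨j, hj⟩ else 0, fun x hx ↦ ?_⟩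
  have hxΛ : x ∈ span ℤ (Set.range (Λ.subtype ∘ bb)) := by
    rw [hΛ]
    exact subset_span hx
  refine span_mono (Set.range_subset_iff.mpr fun j ↦ Set.mem_range.mpr ⟨Fin.castLE hm j, ?_⟩) hxΛ
  simp

theorem exists_subset_closure_pair_of_finrank_span_le_two {ι : Type*} [Finite ι]
    {S : Set (ι → ℤ)} (h : Set.finrank ℝ ((Int.cast ∘ ·) '' S : Set (ι → ℝ)) ≤ 2) :
    ∃ a b : ι → ℤ, S ⊆ AddSubgroup.closure {a, b} := by
  obtain ⟨w, hw⟩ := exists_subset_span_of_finrank_span_le h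
  have hrange : Set.range w ⊆ {w 0, w 1} := by
    rintro _ ⟨i, rfl⟩
    fin_cases i <;> simp
  refine ⟨w 0, w 1, ?_⟩
  rw [← AddSubgroup.coe_toIntSubmodule, AddSubgroup.toIntSubmodule_closure]
  exact hw.trans (span_mono hrange)

theorem enorm3_eq_norm (x : Fin 3 → ℝ) : enorm3 x = ‖WithLp.toLp 2 x‖ := by
  simp [enorm3, EuclideanSpace.norm_eq]

open RealInnerProductSpace in
theorem dot3_eq_inner (x y : Fin 3 → ℝ) : dot3 x y = ⟪WithLp.toLp 2 x, WithLp.toLp 2 y⟫ := by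
  simp [dot3, PiLp.inner_apply, mul_comm]

theorem setOf_enorm3_dot3_eq_ballSlab (t : Fin 3 → ℝ) (r a : ℝ) :
    {v : Fin 3 → ℤ | enorm3 (zc v) ≤ r ∧ |dot3 (zc v) t| ≤ a} =
      {u | WithLp.toLp 2 (Int.cast ∘ u) ∈ ballSlab (WithLp.toLp 2 t) r a} := by
  ext u
  simp only [ballSlab, Set.mem_ofPred_eq, enorm3_eq_norm, dot3_eq_inner]
  rfl

theorem stmt_8 : ∃ K₀ c : ℝ, 0 < K₀ ∧ 0 < c ∧
    ∀ (t : Fin 3 → ℝ), enorm3 t = 1 →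
    ∀ (N δ K : ℝ), 1 < N → 0 < δ → δ < 1 → K₀ < K →
    δ * K * N^2 ≤
      (({v : Fin 3 → ℤ | enorm3 (zc v) ≤ N ∧ |dot3 (zc v) t| ≤ δ}).ncard : ℝ) →
    ∃ a b : Fin 3 → ℤ,
      c * (δ * K * N^2) ≤
        (({v : Fin 3 → ℤ | v ∈ AddSubgroup.closure {a, b} ∧
            enorm3 (zc v) ≤ N ∧ |dot3 (zc v) t| ≤ δ}).ncard : ℝ) := by
  refine ⟨1000, 1, by norm_num, one_pos, fun t ht N δ K hN hδ _ hK hS ↦ ?_⟩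
  set S := {v : Fin 3 → ℤ | enorm3 (zc v) ≤ N ∧ |dot3 (zc v) t| ≤ δ}
  by_cases hrank : Set.finrank ℝ ((Int.cast ∘ ·) '' S : Set (Fin 3 → ℝ)) ≤ 2
  · obtain ⟨a, b, hab⟩ := exists_subset_closure_pair_of_finrank_span_le_two hrank
    have hS_eq : {v | v ∈ AddSubgroup.closure {a, b} ∧ enorm3 (zc v) ≤ N ∧
        |dot3 (zc v) t| ≤ δ} = S :=
      Set.ext fun v ↦ ⟨fun hv ↦ hv.2, fun hv ↦ ⟨hab hv, hv⟩⟩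
    exact ⟨a, b, by rwa [hS_eq, one_mul]⟩
  · obtain ⟨v, hvS, hv⟩ := exists_linearIndependent_of_card_le_finrank_span (κ := Fin 3)
      (S := S) (by rw [Fintype.card_fin]; omega)
    have hS_eq : S = _ := setOf_enorm3_dot3_eq_ballSlab t N δ
    have hbound := ncard_intPoints_ballSlab_le (t := WithLp.toLp 2 t) (r := N) (a := δ)
      (by rwa [← enorm3_eq_norm]) (by linarith) hδ.le hv fun i ↦ (Set.ext_iff.mp hS_eq _).mp (hvS i)
    rw [← hS_eq] at hbound
    norm_num at hbound
    have hδN : 0 < δ * N ^ 2 := by positivity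
    nlinarith [mul_lt_mul_of_pos_right hK hδN]
end

section
/- Let Λ ⊆ ℤ³ be a lattice of rank 2 with Minkowski-reduced basis {v, w}, V = ‖v‖₂ ≤ W = ‖w‖₂, and suppose ‖v∧w‖₂ ≥ c·VW. Let a ∈ ℝ³, ε₁ = |v·a|, ε₂ = |w·a|, and suppose V, W ≤ N and ε₁, ε₂ ≤ δ. Then #{ n ∈ Λ : |n·a| ≤ δ, ‖n‖₂ ≤ N } ≪_c min( N²/(VW), Nδ/(Vε₂), Nδ/(Wε₁) ). -/
lemma enorm3_pos {u : Fin 3 → ℝ} (hu : u ≠ 0) : 0 < enorm3 u := by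
  have : ∃ i, u i ≠ 0 := by
    by_contra h; push_neg at h; exact hu (funext h)
  obtain ⟨i, hi⟩ := this
  have h1 : (0:ℝ) < (u i)^2 := by positivity
  have h2 : (u i)^2 ≤ ∑ j, (u j)^2 :=
    Finset.single_le_sum (fun j _ => sq_nonneg (u j)) (Finset.mem_univ i)
  exact Real.sqrt_pos.mpr (lt_of_lt_of_le h1 h2)

lemma dot3_lin (v w : Fin 3 → ℤ) (a : Fin 3 → ℝ) (l₁ l₂ : ℤ) :
    dot3 (zc (l₁ • v + l₂ • w)) a
      = (l₁:ℝ) * dot3 (zc v) a + (l₂:ℝ) * dot3 (zc w) a := by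
  simp only [dot3, zc, Fin.sum_univ_three, Pi.add_apply, Pi.smul_apply, smul_eq_mul]
  push_cast
  ring

lemma int_count (α β : ℝ) (hαβ : α ≤ β) (F : Finset ℤ)
    (h : ∀ l ∈ F, α ≤ (l:ℝ) ∧ (l:ℝ) ≤ β) : (F.card : ℝ) ≤ β - α + 1 := by
  have hsub : F ⊆ Finset.Icc ⌈α⌉ ⌊β⌋ := by
    intro l hl
    obtain ⟨h1, h2⟩ := h l hl
    exact Finset.mem_Icc.mpr ⟨Int.ceil_le.mpr h1, Int.le_floor.mpr h2⟩
  have hc : (F.card : ℝ) ≤ ((Finset.Icc ⌈α⌉ ⌊β⌋).card : ℝ) := by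
    exact_mod_cast Finset.card_le_card hsub
  rw [Int.card_Icc] at hc
  rcases le_or_gt ⌈α⌉ ⌊β⌋ with hle | hlt
  · have heq : ((⌊β⌋ + 1 - ⌈α⌉).toNat : ℝ) = (⌊β⌋:ℝ) + 1 - (⌈α⌉:ℝ) := by
      rw [show ((⌊β⌋ + 1 - ⌈α⌉).toNat : ℝ) = (((⌊β⌋ + 1 - ⌈α⌉).toNat : ℤ) : ℝ) by push_cast; ring,
        Int.toNat_of_nonneg (by omega)]
      push_cast; ring
    rw [heq] at hc
    have hf := Int.floor_le β
    have hcl := Int.le_ceil α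
    linarith
  · have h0 : (⌊β⌋ + 1 - ⌈α⌉).toNat = 0 := by omega
    rw [h0] at hc
    norm_num at hc
    rw [hc]
    simp
    linarith

lemma fiber_count (e₁ e₂ δ : ℝ) (hδ : 0 ≤ δ) (hε : 0 < |e₂|) (hεδ : |e₂| ≤ δ)
    (F : Finset (ℤ × ℤ)) (t : Finset ℤ)
    (hfst : ∀ p ∈ F, p.1 ∈ t)
    (hcond : ∀ p ∈ F, |(p.1:ℝ) * e₁ + (p.2:ℝ) * e₂| ≤ δ) :
    (F.card : ℝ) ≤ (t.card : ℝ) * (3 * (δ / |e₂|)) := by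
  classical
  have he₂ : e₂ ≠ 0 := fun h => by simp [h] at hε
  have hcards := Finset.card_eq_sum_card_fiberwise hfst
  have key : ∀ l₁ ∈ t, ((F.filter (fun p => p.1 = l₁)).card : ℝ) ≤ 3 * (δ / |e₂|) := by
    intro l₁ _
    set Ff := F.filter (fun p => p.1 = l₁) with hFf
    have hinj : Set.InjOn Prod.snd (Ff : Set (ℤ × ℤ)) := by
      intro p hp q hq hpq
      simp only [hFf, Finset.coe_filter, Set.mem_setOf_eq] at hp hq
      exact Prod.ext (hp.2.trans hq.2.symm) hpq
    have hG : Ff.card = (Ff.image Prod.snd).card := (Finset.card_image_of_injOn hinj).symm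
    rw [hG]
    set m : ℝ := -((l₁:ℝ) * e₁) / e₂ with hm
    have hd : 0 ≤ δ / |e₂| := div_nonneg hδ (le_of_lt hε)
    have h1 : 1 ≤ δ / |e₂| := (one_le_div hε).mpr hεδ
    have hic := int_count (m - δ/|e₂|) (m + δ/|e₂|) (by linarith) (Ff.image Prod.snd) ?_
    · linarith
    · intro l hl
      obtain ⟨p, hp, hpl⟩ := Finset.mem_image.mp hl
      have hp' := Finset.mem_filter.mp hp
      have hcnd := hcond p hp'.1
      have hp1 : p.1 = l₁ := hp'.2
      rw [hp1, hpl] at hcnd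
      have hkey : (l:ℝ) - m = ((l₁:ℝ) * e₁ + (l:ℝ) * e₂) / e₂ := by
        rw [hm]; field_simp; ring
      have habs : |(l:ℝ) - m| ≤ δ / |e₂| := by
        rw [hkey, abs_div]
        gcongr
      obtain ⟨ha1, ha2⟩ := abs_le.mp habs
      constructor <;> linarith
  calc (F.card : ℝ) = ∑ l₁ ∈ t, ((F.filter (fun p => p.1 = l₁)).card : ℝ) := by
        rw [hcards]; push_cast; rfl
    _ ≤ ∑ _l₁ ∈ t, (3 * (δ / |e₂|)) := Finset.sum_le_sum key
    _ = (t.card : ℝ) * (3 * (δ/|e₂|)) := by rw [Finset.sum_const, nsmul_eq_mul]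

lemma helper1 (t N V W : ℝ) (hV : V ≠ 0) (hW : W ≠ 0) :
    (t*(N/V)) * (t*(N/W)) = t^2 * (N^2/(V*W)) := by
  field_simp

lemma helper2 (t N V δ ε : ℝ) (hV : V ≠ 0) (hε : ε ≠ 0) :
    (t*(N/V)) * (3*(δ/ε)) = 3*t * (N*δ/(V*ε)) := by
  field_simp

lemma helper3 (u X : ℝ) (hu : 0 ≤ u) (hX : 0 ≤ X) : 3*(u+1)*X ≤ 3*(u+1)^2*X := by
  nlinarith [mul_nonneg (mul_nonneg hu hu) hX, mul_nonneg hu hX]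

set_option maxHeartbeats 1000000 in
/-- `stmt_10`: counting lattice points of a rank-2 lattice (with Minkowski-reduced basis
`{v, w}`) in the slab `{n : |n·a| ≤ δ, ‖n‖₂ ≤ N}`.  The constants `c₁, c₂` quantify the
Minkowski reduction `‖λ₁v + λ₂w‖₂ ≍ |λ₁|V + |λ₂|W`; the conclusion's constant depends
only on `c, c₁, c₂`.  The bounds `Nδ/(Vε₂)`, `Nδ/(Wε₁)` are asserted when `ε₂` (resp.
`ε₁`) is nonzero, matching the convention that they are `∞` otherwise. -/
theorem stmt_10 (c c₁ c₂ : ℝ) (hc : 0 < c) (hc₁ : 0 < c₁) (hc₂ : 0 < c₂) :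
    ∃ C : ℝ, 0 < C ∧
    ∀ (v w : Fin 3 → ℤ) (a : Fin 3 → ℝ) (N δ : ℝ),
      LinearIndependent ℝ ![zc v, zc w] →
      enorm3 (zc v) ≤ enorm3 (zc w) →
      (∀ l₁ l₂ : ℤ,
        c₁ * (|(l₁ : ℝ)| * enorm3 (zc v) + |(l₂ : ℝ)| * enorm3 (zc w))
            ≤ enorm3 (zc (l₁ • v + l₂ • w)) ∧
        enorm3 (zc (l₁ • v + l₂ • w))
            ≤ c₂ * (|(l₁ : ℝ)| * enorm3 (zc v) + |(l₂ : ℝ)| * enorm3 (zc w))) →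
      c * (enorm3 (zc v) * enorm3 (zc w))
        ≤ Real.sqrt (((v 1 * w 2 - v 2 * w 1 : ℤ) : ℝ)^2
            + ((v 2 * w 0 - v 0 * w 2 : ℤ) : ℝ)^2
            + ((v 0 * w 1 - v 1 * w 0 : ℤ) : ℝ)^2) →
      enorm3 (zc v) ≤ N → enorm3 (zc w) ≤ N →
      |dot3 (zc v) a| ≤ δ → |dot3 (zc w) a| ≤ δ →
      ((({p : ℤ × ℤ | |dot3 (zc (p.1 • v + p.2 • w)) a| ≤ δ ∧
            enorm3 (zc (p.1 • v + p.2 • w)) ≤ N}).ncard : ℝ)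
          ≤ C * (N^2 / (enorm3 (zc v) * enorm3 (zc w)))) ∧
      (0 < |dot3 (zc w) a| →
        (({p : ℤ × ℤ | |dot3 (zc (p.1 • v + p.2 • w)) a| ≤ δ ∧
            enorm3 (zc (p.1 • v + p.2 • w)) ≤ N}).ncard : ℝ)
          ≤ C * (N * δ / (enorm3 (zc v) * |dot3 (zc w) a|))) ∧
      (0 < |dot3 (zc v) a| →
        (({p : ℤ × ℤ | |dot3 (zc (p.1 • v + p.2 • w)) a| ≤ δ ∧
            enorm3 (zc (p.1 • v + p.2 • w)) ≤ N}).ncard : ℝ)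
          ≤ C * (N * δ / (enorm3 (zc w) * |dot3 (zc v) a|))) := by
  classical
  refine ⟨3 * (2/c₁ + 1)^2, by positivity, ?_⟩
  intro v w a N δ hli hVW hmink hwedge hVN hWN hε₁ hε₂
  have hv0 : zc v ≠ 0 := by simpa using hli.ne_zero 0
  have hw0 : zc w ≠ 0 := by simpa using hli.ne_zero 1
  set V := enorm3 (zc v) with hVdef
  set W := enorm3 (zc w) with hWdef
  have hVpos : 0 < V := enorm3_pos hv0
  have hWpos : 0 < W := enorm3_pos hw0
  have hNpos : 0 < N := lt_of_lt_of_le hVpos hVN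
  have hδ0 : 0 ≤ δ := le_trans (abs_nonneg _) hε₁
  set e₁ := dot3 (zc v) a with he₁def
  set e₂ := dot3 (zc w) a with he₂def
  set A := ⌊N / (c₁ * V)⌋ with hAdef
  set B := ⌊N / (c₁ * W)⌋ with hBdef
  have hA0 : 0 ≤ A := Int.le_floor.mpr (by push_cast; positivity)
  have hB0 : 0 ≤ B := Int.le_floor.mpr (by push_cast; positivity)
  set box : Finset (ℤ × ℤ) := Finset.Icc (-A) A ×ˢ Finset.Icc (-B) B with hboxdef
  set F : Finset (ℤ × ℤ) := box.filter
    (fun p : ℤ × ℤ => |dot3 (zc (p.1 • v + p.2 • w)) a| ≤ δ ∧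
      enorm3 (zc (p.1 • v + p.2 • w)) ≤ N) with hFdef
  have hbox : ∀ p : ℤ × ℤ, enorm3 (zc (p.1 • v + p.2 • w)) ≤ N → p ∈ box := by
    intro p hp
    have hm := (hmink p.1 p.2).1
    have hm' : c₁ * (|(p.1:ℝ)| * V + |(p.2:ℝ)| * W) ≤ N := le_trans hm hp
    have h1 : |(p.1:ℝ)| ≤ N / (c₁ * V) := by
      rw [le_div_iff₀ (by positivity)]
      nlinarith [mul_nonneg (abs_nonneg ((p.2:ℝ))) hWpos.le]
    have h2 : |(p.2:ℝ)| ≤ N / (c₁ * W) := by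
      rw [le_div_iff₀ (by positivity)]
      nlinarith [mul_nonneg (abs_nonneg ((p.1:ℝ))) hVpos.le]
    have h1' : |p.1| ≤ A := Int.le_floor.mpr (by push_cast; exact h1)
    have h2' : |p.2| ≤ B := Int.le_floor.mpr (by push_cast; exact h2)
    exact Finset.mem_product.mpr
      ⟨Finset.mem_Icc.mpr (abs_le.mp h1'), Finset.mem_Icc.mpr (abs_le.mp h2')⟩
  have hSeq : {p : ℤ × ℤ | |dot3 (zc (p.1 • v + p.2 • w)) a| ≤ δ ∧
      enorm3 (zc (p.1 • v + p.2 • w)) ≤ N} = (F : Set (ℤ × ℤ)) := by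
    ext p
    constructor
    · intro h
      exact Finset.mem_coe.mpr (Finset.mem_filter.mpr ⟨hbox p h.2, h⟩)
    · intro h
      exact (Finset.mem_filter.mp (Finset.mem_coe.mp h)).2
  rw [hSeq, Set.ncard_coe_finset]
  have hVne : V ≠ 0 := ne_of_gt hVpos
  have hWne : W ≠ 0 := ne_of_gt hWpos
  have hKA : ((Finset.Icc (-A) A).card : ℝ) ≤ (2/c₁+1) * (N/V) := by
    rw [Int.card_Icc]
    have h1 : (A:ℝ) ≤ N/(c₁*V) := Int.floor_le _
    have h2 : (1:ℝ) ≤ N/V := (one_le_div hVpos).mpr hVN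
    have h3 : ((A + 1 - -A).toNat : ℝ) = 2*(A:ℝ)+1 := by
      rw [show ((A + 1 - -A).toNat : ℝ) = (((A + 1 - -A).toNat : ℤ) : ℝ) by push_cast; ring,
        Int.toNat_of_nonneg (by omega)]
      push_cast; ring
    rw [h3]
    have h5 : (2/c₁+1)*(N/V) = 2*(N/(c₁*V)) + N/V := by
      field_simp
    rw [h5]; linarith
  have hKB : ((Finset.Icc (-B) B).card : ℝ) ≤ (2/c₁+1) * (N/W) := by
    rw [Int.card_Icc]
    have h1 : (B:ℝ) ≤ N/(c₁*W) := Int.floor_le _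
    have h2 : (1:ℝ) ≤ N/W := (one_le_div hWpos).mpr hWN
    have h3 : ((B + 1 - -B).toNat : ℝ) = 2*(B:ℝ)+1 := by
      rw [show ((B + 1 - -B).toNat : ℝ) = (((B + 1 - -B).toNat : ℤ) : ℝ) by push_cast; ring,
        Int.toNat_of_nonneg (by omega)]
      push_cast; ring
    rw [h3]
    have h5 : (2/c₁+1)*(N/W) = 2*(N/(c₁*W)) + N/W := by
      field_simp
    rw [h5]; linarith
  have hcond : ∀ p ∈ F, |(p.1:ℝ) * e₁ + (p.2:ℝ) * e₂| ≤ δ := by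
    intro p hp
    have h := (Finset.mem_filter.mp hp).2.1
    rwa [dot3_lin] at h
  have ht0 : (0:ℝ) ≤ 2/c₁ := by positivity
  refine ⟨?_, ?_, ?_⟩
  · -- bound N²/(VW)
    have h1 : (F.card : ℝ) ≤ ((Finset.Icc (-A) A).card : ℝ) * ((Finset.Icc (-B) B).card : ℝ) := by
      have hle : F.card ≤ box.card := by
        rw [hFdef]; exact Finset.card_le_card (Finset.filter_subset _ _)
      have hbc : box.card = (Finset.Icc (-A) A).card * (Finset.Icc (-B) B).card :=
        Finset.card_product _ _
      rw [hbc] at hle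
      exact_mod_cast hle
    have h2 : (F.card:ℝ) ≤ ((2/c₁+1)*(N/V)) * ((2/c₁+1)*(N/W)) :=
      le_trans h1 (mul_le_mul hKA hKB (by positivity) (by positivity))
    have heq := helper1 (2/c₁+1) N V W hVne hWne
    rw [heq] at h2
    have hX : 0 ≤ (2/c₁+1)^2 * (N^2/(V*W)) := by positivity
    linarith
  · -- bound Nδ/(V ε₂)
    intro hε₂pos
    have he2ne : |e₂| ≠ 0 := ne_of_gt hε₂pos
    have hfst : ∀ p ∈ F, p.1 ∈ Finset.Icc (-A) A := by
      intro p hp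
      exact (Finset.mem_product.mp (Finset.mem_filter.mp hp).1).1
    have hb := fiber_count e₁ e₂ δ hδ0 hε₂pos hε₂ F (Finset.Icc (-A) A) hfst hcond
    have hd3 : (0:ℝ) ≤ 3 * (δ / |e₂|) := by positivity
    have hb2 : (F.card : ℝ) ≤ ((2/c₁+1)*(N/V)) * (3*(δ/|e₂|)) :=
      le_trans hb (mul_le_mul_of_nonneg_right hKA hd3)
    have heq := helper2 (2/c₁+1) N V δ (|e₂|) hVne he2ne
    rw [heq] at hb2
    have hX : 0 ≤ N*δ/(V*|e₂|) := by positivity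
    linarith [helper3 (2/c₁) (N*δ/(V*|e₂|)) ht0 hX]
  · -- bound Nδ/(W ε₁)
    intro hε₁pos
    have he1ne : |e₁| ≠ 0 := ne_of_gt hε₁pos
    have hcard' : F.card = (F.image Prod.swap).card :=
      (Finset.card_image_of_injective _ Prod.swap_injective).symm
    have hfst : ∀ p ∈ F.image Prod.swap, p.1 ∈ Finset.Icc (-B) B := by
      intro p hp
      obtain ⟨q, hq, rfl⟩ := Finset.mem_image.mp hp
      exact (Finset.mem_product.mp (Finset.mem_filter.mp hq).1).2
    have hcond' : ∀ p ∈ F.image Prod.swap, |(p.1:ℝ) * e₂ + (p.2:ℝ) * e₁| ≤ δ := by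
      intro p hp
      obtain ⟨q, hq, rfl⟩ := Finset.mem_image.mp hp
      simp only [Prod.fst_swap, Prod.snd_swap]
      rw [add_comm]
      exact hcond q hq
    have hb := fiber_count e₂ e₁ δ hδ0 hε₁pos hε₁ (F.image Prod.swap) (Finset.Icc (-B) B)
      hfst hcond'
    have hd3 : (0:ℝ) ≤ 3 * (δ / |e₁|) := by positivity
    rw [← hcard'] at hb
    have hb2 : (F.card : ℝ) ≤ ((2/c₁+1)*(N/W)) * (3*(δ/|e₁|)) :=
      le_trans hb (mul_le_mul_of_nonneg_right hKB hd3)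
    have heq := helper2 (2/c₁+1) N W δ (|e₁|) hWne he1ne
    rw [heq] at hb2
    have hX : 0 ≤ N*δ/(W*|e₁|) := by positivity
    linarith [helper3 (2/c₁) (N*δ/(W*|e₁|)) ht0 hX]
end

section
/- Let a ∈ ℤ be nonzero, X an integer, and let M_a be the minimum of (c₁² + c₂²)^{1/2} over all pairs of integers (c₁, c₂) ≠ (0,0) with c₁ ≡ c₂X (mod a). If M < X/2, then #{ a ∈ [A, 2A) : M_a ∈ [M, 2M), c₁ − c₂X ≠ 0 for the minimizing pair } ≤ X^{o(1)}·M², i.e. the number of integers a in any dyadic range with M_a ≍ M is at most X^{o(1)}·M². -/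
/-!
Every counted `a` divides a nonzero value `c₁ - c₂X` with `c₁² + c₂² < 4M²`. There are `O(M²)`
such pairs `(c₁, c₂)`, and since `2M < X` each value has size at most `2X²`, so by the divisor bound
`d(n) ≪_δ n^δ` it has at most `X^{o(1)}` divisors.
-/

open Finset

lemma exists_add_one_le_mul_two_rpow {ε : ℝ} (hε : 0 < ε) :
    ∃ K : ℝ, 1 ≤ K ∧ ∀ k : ℕ, (k + 1 : ℝ) ≤ K * 2 ^ (ε * k) := by
  have hlog : 0 < ε * Real.log 2 := mul_pos hε (Real.log_pos one_lt_two)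
  refine ⟨max 1 (ε * Real.log 2)⁻¹, le_max_left _ _, fun k => ?_⟩
  have hK : 1 ≤ max 1 (ε * Real.log 2)⁻¹ * (ε * Real.log 2) :=
    (inv_mul_cancel₀ hlog.ne').symm.le.trans
      (mul_le_mul_of_nonneg_right (le_max_right _ _) hlog.le)
  have hexp : ε * k * Real.log 2 + 1 ≤ (2 : ℝ) ^ (ε * k) := by
    rw [Real.rpow_def_of_pos two_pos, mul_comm (Real.log 2)]
    exact Real.add_one_le_exp _
  nlinarith [le_max_left 1 (ε * Real.log 2)⁻¹, (k.cast_nonneg : (0 : ℝ) ≤ k)]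

lemma add_one_le_rpow_mul_of_two_le_rpow {p ε : ℝ} (hp : 0 ≤ p) (h : 2 ≤ p ^ ε) (k : ℕ) :
    (k + 1 : ℝ) ≤ p ^ (ε * k) := by
  rw [Real.rpow_mul_natCast hp]
  calc (k + 1 : ℝ) ≤ 2 ^ k := by exact_mod_cast Nat.lt_two_pow_self
    _ ≤ (p ^ ε) ^ k := pow_le_pow_left₀ two_pos.le h k

namespace Nat

theorem exists_card_divisors_le_mul_rpow {ε : ℝ} (hε : 0 < ε) :
    ∃ C : ℝ, 0 < C ∧ ∀ n : ℕ, (#n.divisors : ℝ) ≤ C * (n : ℝ) ^ ε := by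
  obtain ⟨K, hK, hKk⟩ := exists_add_one_le_mul_two_rpow hε
  set B := ⌈(2 : ℝ) ^ ε⁻¹⌉₊
  refine ⟨K ^ (B + 1), by positivity, fun n => ?_⟩
  rcases eq_or_ne n 0 with rfl | hn
  · simp [Real.zero_rpow hε.ne']
  -- Only the primes `p ≤ B`, for which `p ^ ε` may be below `2`, cost a factor `K`.
  have hprime : ∀ p ∈ n.primeFactors, ((n.factorization p + 1 : ℕ) : ℝ) ≤
      (if p ≤ B then K else 1) * (p : ℝ) ^ (ε * n.factorization p) := by
    intro p hp
    have hp2 : (2 : ℝ) ≤ p := by exact_mod_cast (prime_of_mem_primeFactors hp).two_le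
    push_cast
    split_ifs with hpB
    · calc _ ≤ K * 2 ^ (ε * n.factorization p) := hKk _
        _ ≤ K * (p : ℝ) ^ (ε * n.factorization p) := by gcongr
    · have hBp : (2 : ℝ) ^ ε⁻¹ ≤ p := (Nat.le_ceil _).trans (by exact_mod_cast (not_le.mp hpB).le)
      have h2p : 2 ≤ (p : ℝ) ^ ε := by
        simpa [← Real.rpow_mul two_pos.le, inv_mul_cancel₀ hε.ne'] using
          Real.rpow_le_rpow (by positivity) hBp hε.le
      rw [one_mul]
      exact add_one_le_rpow_mul_of_two_le_rpow (by positivity) h2p _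
  have hweights : ∏ p ∈ n.primeFactors, (if p ≤ B then K else 1) ≤ K ^ (B + 1) := by
    rw [← prod_filter, prod_const]
    refine pow_le_pow_right₀ hK ((card_le_card fun p hp => ?_).trans (card_range _).le)
    exact mem_range.mpr (Nat.lt_succ_of_le (mem_filter.mp hp).2)
  have hpowers : ∏ p ∈ n.primeFactors, (p : ℝ) ^ (ε * n.factorization p) = (n : ℝ) ^ ε := by
    simp_rw [mul_comm ε, Real.rpow_natCast_mul (Nat.cast_nonneg _)]
    rw [Real.finsetProd_rpow _ _ fun p _ => by positivity]
    exact_mod_cast congrArg (fun m : ℕ => (m : ℝ) ^ ε) (prod_primeFactors_pow_factorization hn).symm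
  calc (#n.divisors : ℝ) = ∏ p ∈ n.primeFactors, ((n.factorization p + 1 : ℕ) : ℝ) := by
        rw [card_divisors hn]; push_cast; rfl
    _ ≤ ∏ p ∈ n.primeFactors, ((if p ≤ B then K else 1) * (p : ℝ) ^ (ε * n.factorization p)) :=
        prod_le_prod (fun _ _ => by positivity) hprime
    _ ≤ K ^ (B + 1) * (n : ℝ) ^ ε := by
        rw [prod_mul_distrib, hpowers]
        exact mul_le_mul_of_nonneg_right hweights (by positivity)

end Nat

lemma abs_lt_of_sqrt_sq_add_sq_lt {x y R : ℝ} (h : √(x ^ 2 + y ^ 2) < R) : |x| < R ∧ |y| < R := by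
  constructor <;> refine lt_of_le_of_lt ?_ h <;> rw [← Real.sqrt_sq_eq_abs] <;> gcongr <;>
    linarith [sq_nonneg x, sq_nonneg y]

namespace Int

lemma ncard_le_two_mul_card_of_natAbs_mem {S : Set ℤ} {D : Finset ℕ}
    (h : ∀ a ∈ S, a.natAbs ∈ D) : S.ncard ≤ 2 * #D := by
  have hsub : S ⊆ ↑(D.image ((↑) : ℕ → ℤ) ∪ D.image fun d : ℕ => -(d : ℤ)) := by
    intro a ha
    rcases natAbs_eq a with hpos | hneg
    · exact mem_union_left _ (mem_image.mpr ⟨_, h a ha, hpos.symm⟩)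
    · exact mem_union_right _ (mem_image.mpr ⟨_, h a ha, hneg.symm⟩)
  calc S.ncard ≤ #(D.image ((↑) : ℕ → ℤ) ∪ D.image fun d : ℕ => -(d : ℤ)) := by
        simpa only [Set.ncard_coe_finset] using Set.ncard_le_ncard hsub (finite_toSet _)
    _ ≤ #D + #D := (card_union_le _ _).trans (add_le_add card_image_le card_image_le)
    _ = 2 * #D := (two_mul _).symm

lemma ncard_le_of_forall_dvd {ι : Type*} (s : Finset ι) (f : ι → ℤ) {B : ℝ}
    (hB : ∀ i ∈ s, (#(f i).natAbs.divisors : ℝ) ≤ B) {S : Set ℤ}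
    (hS : ∀ a ∈ S, ∃ i ∈ s, f i ≠ 0 ∧ a ∣ f i) : (S.ncard : ℝ) ≤ 2 * #s * B := by
  classical
  have hD : ∀ a ∈ S, a.natAbs ∈ s.biUnion fun i => (f i).natAbs.divisors := by
    intro a ha
    obtain ⟨i, hi, hfi, hdvd⟩ := hS a ha
    exact mem_biUnion.mpr ⟨i, hi, Nat.mem_divisors.mpr
      ⟨natAbs_dvd_natAbs.mpr hdvd, natAbs_ne_zero.mpr hfi⟩⟩
  calc (S.ncard : ℝ) ≤ 2 * #(s.biUnion fun i => (f i).natAbs.divisors) := by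
        exact_mod_cast ncard_le_two_mul_card_of_natAbs_mem hD
    _ ≤ 2 * ∑ i ∈ s, (#(f i).natAbs.divisors : ℝ) := by
        gcongr; exact_mod_cast card_biUnion_le
    _ ≤ 2 * #s * B := by
        rw [mul_assoc, ← nsmul_eq_mul, ← sum_const]; gcongr with i hi; exact hB i hi

lemma mem_Icc_floor_of_abs_lt {c : ℤ} {R : ℝ} (h : |(c : ℝ)| < R) :
    c ∈ Icc (-(⌊R⌋₊ : ℤ)) ⌊R⌋₊ := by
  have : c.natAbs ≤ ⌊R⌋₊ := Nat.le_floor (by rw [Nat.cast_natAbs, cast_abs]; exact h.le)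
  rw [mem_Icc]; omega

lemma card_Icc_neg_self (N : ℕ) : #(Icc (-(N : ℤ)) N) = 2 * N + 1 := by
  rw [card_Icc]; omega

lemma abs_sub_mul_le {N : ℕ} {c₁ c₂ : ℤ} (h₁ : c₁ ∈ Icc (-(N : ℤ)) N)
    (h₂ : c₂ ∈ Icc (-(N : ℤ)) N) (X : ℤ) : |c₁ - c₂ * X| ≤ N * (1 + |X|) := by
  have h₁' : |c₁| ≤ N := abs_le.mpr (mem_Icc.mp h₁)
  have h₂' : |c₂| ≤ N := abs_le.mpr (mem_Icc.mp h₂)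
  calc |c₁ - c₂ * X| ≤ |c₁| + |c₂| * |X| := (abs_sub _ _).trans_eq (by rw [abs_mul])
    _ ≤ N * (1 + |X|) := by nlinarith [abs_nonneg X]

lemma one_le_sqrt_sq_add_sq {c₁ c₂ : ℤ} (h : ¬(c₁ = 0 ∧ c₂ = 0)) :
    1 ≤ √((c₁ : ℝ) ^ 2 + (c₂ : ℝ) ^ 2) := by
  have hsq : (1 : ℤ) ≤ c₁ ^ 2 + c₂ ^ 2 := by
    rcases not_and_or.mp h with h | h
    · nlinarith [sq_pos_of_ne_zero h, sq_nonneg c₂]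
    · nlinarith [sq_pos_of_ne_zero h, sq_nonneg c₁]
  exact Real.one_le_sqrt.mpr (by exact_mod_cast hsq)

end Int

open Int in
theorem ncard_le_of_forall_dvd_sub_mul {S : Set ℤ} {X : ℤ} {R C₀ δ : ℝ} (hX : 1 ≤ X)
    (hRX : R ≤ X) (hδ : 0 ≤ δ) (hdiv : ∀ n : ℕ, (#n.divisors : ℝ) ≤ C₀ * (n : ℝ) ^ δ)
    (hS : ∀ a ∈ S, ∃ c₁ c₂ : ℤ, c₁ - c₂ * X ≠ 0 ∧ a ∣ c₁ - c₂ * X ∧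
      √((c₁ : ℝ) ^ 2 + (c₂ : ℝ) ^ 2) < R) :
    (S.ncard : ℝ) ≤ 18 * C₀ * (2 * (X : ℝ) ^ 2) ^ δ * R ^ 2 := by
  have hC₀ : 0 ≤ C₀ := zero_le_one.trans (by simpa using hdiv 1)
  rcases S.eq_empty_or_nonempty with rfl | ⟨a, ha⟩
  · simp only [Set.ncard_empty, Nat.cast_zero]; positivity
  have hR : 1 ≤ R := by
    obtain ⟨c₁, c₂, hne, -, hlt⟩ := hS a ha
    refine (one_le_sqrt_sq_add_sq fun h => hne ?_).trans hlt.le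
    simp [h.1, h.2]
  have hXR : (1 : ℝ) ≤ X := by exact_mod_cast hX
  set N := ⌊R⌋₊
  have hN : (N : ℝ) ≤ R := Nat.floor_le (by linarith)
  refine (ncard_le_of_forall_dvd (Icc (-(N : ℤ)) N ×ˢ Icc (-(N : ℤ)) N)
    (fun c => c.1 - c.2 * X) (B := C₀ * (2 * (X : ℝ) ^ 2) ^ δ) ?_ ?_).trans ?_
  · rintro ⟨c₁, c₂⟩ hc
    obtain ⟨h₁, h₂⟩ := mem_product.mp hc
    have hsize : ((c₁ - c₂ * X).natAbs : ℝ) ≤ 2 * (X : ℝ) ^ 2 := by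
      have := abs_sub_mul_le h₁ h₂ X
      rw [abs_of_pos (by omega : 0 < X)] at this
      rw [Nat.cast_natAbs, cast_abs]
      calc _ ≤ (N : ℝ) * (1 + X) := by exact_mod_cast this
        _ ≤ 2 * (X : ℝ) ^ 2 := by nlinarith
    exact (hdiv _).trans (by gcongr)
  · intro a ha
    obtain ⟨c₁, c₂, hne, hdvd, hlt⟩ := hS a ha
    obtain ⟨h₁, h₂⟩ := abs_lt_of_sqrt_sq_add_sq_lt hlt
    exact ⟨(c₁, c₂), mem_product.mpr ⟨mem_Icc_floor_of_abs_lt h₁, mem_Icc_floor_of_abs_lt h₂⟩,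
      hne, hdvd⟩
  · have hbox : (#(Icc (-(N : ℤ)) N ×ˢ Icc (-(N : ℤ)) N) : ℝ) ≤ 9 * R ^ 2 := by
      rw [card_product, card_Icc_neg_self]; push_cast; nlinarith
    calc _ ≤ 2 * (9 * R ^ 2) * (C₀ * (2 * (X : ℝ) ^ 2) ^ δ) := by gcongr
      _ = _ := by ring

/-- `stmt_13`: the number of nonzero integers `a` in a dyadic range `[A, 2A)` whose minimal
vector `(c₁, c₂) ≠ 0` with `c₁ ≡ c₂X (mod a)` has length in `[M, 2M)` (and `c₁ - c₂X ≠ 0`)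
is at most `X^{o(1)} M²`: for every `ε > 0` there is a constant `C` so that the count is
at most `C X^ε M²`. -/
theorem stmt_13 (ε : ℝ) (hε : 0 < ε) : ∃ C : ℝ, 0 < C ∧
    ∀ (X : ℤ) (A M : ℝ), 1 ≤ X → M < (X : ℝ) / 2 →
      (({a : ℤ | a ≠ 0 ∧ A ≤ (a : ℝ) ∧ (a : ℝ) < 2 * A ∧
          ∃ c₁ c₂ : ℤ, ¬(c₁ = 0 ∧ c₂ = 0) ∧ a ∣ (c₁ - c₂ * X) ∧ c₁ - c₂ * X ≠ 0 ∧
            M ≤ Real.sqrt ((c₁ : ℝ)^2 + (c₂ : ℝ)^2) ∧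
            Real.sqrt ((c₁ : ℝ)^2 + (c₂ : ℝ)^2) < 2 * M ∧
            ∀ d₁ d₂ : ℤ, ¬(d₁ = 0 ∧ d₂ = 0) → a ∣ (d₁ - d₂ * X) →
              Real.sqrt ((c₁ : ℝ)^2 + (c₂ : ℝ)^2)
                ≤ Real.sqrt ((d₁ : ℝ)^2 + (d₂ : ℝ)^2)}).ncard : ℝ)
        ≤ C * (X : ℝ)^ε * M^2 := by
  obtain ⟨C₀, hC₀, hdiv⟩ := Nat.exists_card_divisors_le_mul_rpow (half_pos hε)
  refine ⟨72 * C₀ * 2 ^ (ε / 2), by positivity, fun X A M hX hM => ?_⟩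
  have hX₀ : (0 : ℝ) ≤ X := by exact_mod_cast zero_le_one.trans hX
  have hpow : (2 * (X : ℝ) ^ 2) ^ (ε / 2) = 2 ^ (ε / 2) * (X : ℝ) ^ ε := by
    rw [Real.mul_rpow two_pos.le (by positivity), ← Real.rpow_natCast_mul hX₀]
    congr 2; push_cast; ring
  refine (ncard_le_of_forall_dvd_sub_mul (R := 2 * M) hX (by linarith) (half_pos hε).le hdiv
    ?_).trans_eq (by rw [hpow]; ring)
  rintro a ⟨-, -, -, c₁, c₂, -, hdvd, hne, -, hlt, -⟩
  exact ⟨c₁, c₂, hne, hdvd, hlt⟩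
end

section
/- Let X = 10^x, a₀ ∈ {0,…,9}, and 𝒜 = {n < X : no decimal digit of n equals a₀}. For any positive integer q with gcd(q, 10) = 1, #{a ∈ 𝒜 : q | a, gcd(a,10) = 1} = (1/q)·#{a ∈ 𝒜 : gcd(a,10)=1} + O( (#𝒜/q)·Σ_{q'|q, q'>1} Σ_{1≤b≤10q', gcd(b,q')=1} F_X(b/(10q')) ), where F_X(θ) = (1/#𝒜)|Σ_{a∈𝒜} e(aθ)|. -/
/-- The set `𝒜` of integers below `10^x` none of whose `x` base-10 digits equals `a₀`. -/
def A (a₀ x : ℕ) : Finset ℕ :=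
  (Finset.range (10^x)).filter (fun n => ∀ i < x, n / 10^i % 10 ≠ a₀)

/-- `F_X(θ) = (1/#𝒜)|Σ_{a∈𝒜} e(aθ)|`. -/
noncomputable def FX (a₀ x : ℕ) (θ : ℝ) : ℝ :=
  (1 / ((A a₀ x).card : ℝ)) * ‖∑ a ∈ A a₀ x, e ((a : ℝ) * θ)‖

/-
Write 1[gcd(a,10)=1] = Σ_{d ∣ 10} μ(d) 1[d ∣ a]; since q is coprime to 10, the left side
becomes Σ_{d ∣ 10} μ(d) (#{a ∈ 𝒜 : dq ∣ a} - #{a ∈ 𝒜 : d ∣ a}/q). Detecting N ∣ a by the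
additive characters r ↦ e(ar/N), the frequencies r/(dq) that are multiples of 1/d reproduce
#{d ∣ a}/q exactly, and every remaining frequency, written in lowest terms, is a fraction
b/(10q') with 1 < q' ∣ q and gcd(b,q') = 1, distinct r giving distinct fractions. Each of the
four error terms is therefore at most (1/q) Σ_{q',b} |Σ_{a∈𝒜} e(ab/(10q'))|.
-/

open Finset ArithmeticFunction
open scoped ArithmeticFunction.Moebius ArithmeticFunction.zeta

lemma sum_range_e_mul_div_eq_ite {N : ℕ} (hN : N ≠ 0) (a : ℕ) :
    ∑ r ∈ range N, e (a * (r / N)) = if N ∣ a then (N : ℂ) else 0 := by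
  set ω := Complex.exp (2 * Real.pi * Complex.I / N)
  have hω : IsPrimitiveRoot ω N := Complex.isPrimitiveRoot_exp N hN
  have he : ∀ r : ℕ, e (a * (r / N)) = (ω ^ a) ^ r := by
    intro r
    rw [← pow_mul, ← Complex.exp_nat_mul, e]
    push_cast
    ring_nf
  simp_rw [he]
  split_ifs with h
  · simp [(hω.pow_eq_one_iff_dvd a).2 h]
  · have hωa : ω ^ a ≠ 1 := mt (hω.pow_eq_one_iff_dvd a).1 h
    have hgeom : (1 - ω ^ a) * ∑ r ∈ range N, (ω ^ a) ^ r = 0 := by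
      rw [mul_neg_geom_sum, ← pow_mul, mul_comm, pow_mul, hω.pow_eq_one, one_pow, sub_self]
    exact (mul_eq_zero.1 hgeom).resolve_left (sub_ne_zero.2 hωa.symm)

noncomputable def expSum (s : Finset ℕ) (θ : ℝ) : ℂ := ∑ a ∈ s, e (a * θ)

lemma card_filter_dvd_eq_sum_expSum (s : Finset ℕ) {N : ℕ} (hN : N ≠ 0) :
    (#{a ∈ s | N ∣ a} : ℂ) = 1 / N * ∑ r ∈ range N, expSum s (r / N) := by
  simp_rw [expSum]
  rw [sum_comm, card_filter]
  simp_rw [sum_range_e_mul_div_eq_ite hN, mul_sum]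
  push_cast
  refine sum_congr rfl fun a _ => ?_
  split_ifs <;> simp [hN]

lemma filter_dvd_range_mul_eq_image {q : ℕ} (hq : q ≠ 0) (d : ℕ) :
    {r ∈ range (d * q) | q ∣ r} = (range d).image (q * ·) := by
  ext r
  simp only [mem_filter, mem_range, mem_image]
  constructor
  · rintro ⟨hr, t, rfl⟩
    exact ⟨t, by nlinarith [Nat.pos_of_ne_zero hq], rfl⟩
  · rintro ⟨t, ht, rfl⟩
    exact ⟨by nlinarith [Nat.pos_of_ne_zero hq], t, rfl⟩

lemma card_filter_mul_dvd_sub_eq (s : Finset ℕ) {d q : ℕ} (hd : d ≠ 0) (hq : q ≠ 0) :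
    (#{a ∈ s | d * q ∣ a} : ℂ) - 1 / q * #{a ∈ s | d ∣ a} =
      1 / (d * q) * ∑ r ∈ range (d * q) with ¬ q ∣ r, expSum s (r / (d * q)) := by
  have hdq : d * q ≠ 0 := mul_ne_zero hd hq
  have hmult : ∑ r ∈ range (d * q) with q ∣ r, expSum s (r / (d * q)) =
      ∑ t ∈ range d, expSum s (t / d) := by
    rw [filter_dvd_range_mul_eq_image hq, sum_image fun _ _ _ _ h => Nat.eq_of_mul_eq_mul_left
      (Nat.pos_of_ne_zero hq) h]
    refine sum_congr rfl fun t _ => congrArg _ ?_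
    push_cast
    field_simp
  rw [card_filter_dvd_eq_sum_expSum s hdq, card_filter_dvd_eq_sum_expSum s hd,
    ← sum_filter_add_sum_filter_not _ (q ∣ ·)]
  push_cast
  rw [hmult]
  field_simp
  ring

lemma sum_divisors_moebius (n : ℕ) : ∑ d ∈ n.divisors, (μ d : ℤ) = if n = 1 then 1 else 0 := by
  rw [← coe_mul_zeta_apply, moebius_mul_coe_zeta, one_apply]

lemma ite_dvd_and_coprime_eq_sum_moebius {m q : ℕ} (hm : m ≠ 0) (hqm : Nat.gcd q m = 1) (a : ℕ) :
    (if q ∣ a ∧ Nat.gcd a m = 1 then 1 else 0 : ℤ) =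
      ∑ d ∈ m.divisors, μ d * if d * q ∣ a then 1 else 0 := by
  have hdq : ∀ d ∈ m.divisors, (d * q ∣ a ↔ d ∣ Nat.gcd m a ∧ q ∣ a) := fun d hd => by
    have hdm : d ∣ m := Nat.dvd_of_mem_divisors hd
    have hcop : Nat.Coprime d q := Nat.Coprime.coprime_dvd_left hdm (Nat.coprime_comm.1 hqm)
    rw [Nat.dvd_gcd_iff]
    exact ⟨fun h => ⟨⟨hdm, dvd_of_mul_right_dvd h⟩, dvd_of_mul_left_dvd h⟩,
      fun ⟨⟨_, hda⟩, hqa⟩ => hcop.mul_dvd_of_dvd_of_dvd hda hqa⟩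
  simp_rw [mul_ite, mul_one, mul_zero]
  rw [sum_congr rfl fun d hd => if_congr (hdq d hd) rfl rfl]
  by_cases hqa : q ∣ a
  · rw [← sum_filter, filter_and, filter_true_of_mem fun _ _ => hqa,
      inter_eq_left.2 (filter_subset _ _), Nat.divisors_filter_dvd_of_dvd hm (Nat.gcd_dvd_left m a),
      sum_divisors_moebius]
    simp [hqa, Nat.gcd_comm]
  · simp [hqa]

lemma card_filter_dvd_and_coprime_eq_sum_moebius (s : Finset ℕ) {m q : ℕ} (hm : m ≠ 0)
    (hqm : Nat.gcd q m = 1) :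
    (#{a ∈ s | q ∣ a ∧ Nat.gcd a m = 1} : ℤ) = ∑ d ∈ m.divisors, μ d * #{a ∈ s | d * q ∣ a} := by
  simp_rw [card_filter, Nat.cast_sum, mul_sum, Nat.cast_ite, Nat.cast_one, Nat.cast_zero,
    ite_dvd_and_coprime_eq_sum_moebius hm hqm]
  exact sum_comm

-- `⟨q', b⟩` stands for the fraction `b / (m * q')`.
def reducedFractions (m q : ℕ) : Finset (Σ _ : ℕ, ℕ) :=
  (q.divisors.filter (1 < ·)).sigma fun q' => (Icc 1 (m * q')).filter (Nat.gcd · q' = 1)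

-- `r / (d * q)` in lowest terms, rescaled to the denominator `m * q'`.
def reduceFraction (m d q r : ℕ) : Σ _ : ℕ, ℕ := ⟨q / Nat.gcd r q, m / d * (r / Nat.gcd r q)⟩

lemma reduceFraction_spec {m d q r : ℕ} (hd : d ∣ m) (hm : m ≠ 0) (hq : q ≠ 0)
    (hqm : Nat.gcd q m = 1) (hr : r < d * q) (hqr : ¬ q ∣ r) :
    reduceFraction m d q r ∈ reducedFractions m q ∧
      (r : ℝ) / (d * q) = (reduceFraction m d q r).2 / (m * (reduceFraction m d q r).1) := by
  obtain ⟨r', q', hcop, hr', hq'⟩ := Nat.exists_coprime r q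
  set g := Nat.gcd r q
  have hg : 0 < g := Nat.gcd_pos_of_pos_right r (Nat.pos_of_ne_zero hq)
  have hd0 : d ≠ 0 := ne_zero_of_dvd_ne_zero hm hd
  have hmd : m / d * d = m := Nat.div_mul_cancel hd
  have hmd0 : m / d ≠ 0 :=
    (Nat.div_pos (Nat.le_of_dvd (Nat.pos_of_ne_zero hm) hd) (Nat.pos_of_ne_zero hd0)).ne'
  have hq'0 : q' ≠ 0 := by rintro rfl; exact hq (by simpa using hq')
  have hq'1 : q' ≠ 1 := by rintro rfl; exact hqr ⟨r', by rw [hr', hq']; ring⟩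
  have hr'0 : r' ≠ 0 := by rintro rfl; exact hqr (by simp [hr'])
  have hr'lt : r' < d * q' := by
    have : r' * g < d * q' * g := by rw [← hr', mul_assoc, ← hq']; exact hr
    exact Nat.lt_of_mul_lt_mul_right this
  have hcopb : Nat.Coprime (m / d * r') q' :=
    Nat.Coprime.mul_left (Nat.Coprime.coprime_dvd_left (Nat.div_dvd_of_dvd hd)
      (Nat.Coprime.coprime_dvd_right ⟨g, hq'⟩ (Nat.coprime_comm.1 hqm))) hcop
  have hval : reduceFraction m d q r = ⟨q', m / d * r'⟩ := by
    rw [reduceFraction, Nat.div_eq_of_eq_mul_left hg hr', Nat.div_eq_of_eq_mul_left hg hq']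
  rw [hval]
  refine ⟨?_, ?_⟩
  · simp only [reducedFractions, mem_sigma, mem_filter, Nat.mem_divisors, mem_Icc]
    refine ⟨⟨⟨⟨g, hq'⟩, hq⟩, by omega⟩, ⟨?_, ?_⟩, hcopb⟩
    · exact Nat.one_le_iff_ne_zero.2 (mul_ne_zero hmd0 hr'0)
    · calc m / d * r' ≤ m / d * (d * q') := Nat.mul_le_mul_left _ hr'lt.le
        _ = m * q' := by rw [← mul_assoc, hmd]
  · have hmdR : ((m / d : ℕ) : ℝ) * d = m := by exact_mod_cast hmd
    rw [hr', hq']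
    push_cast
    have : (g : ℝ) ≠ 0 := by positivity
    have : (d : ℝ) ≠ 0 := by exact_mod_cast hd0
    have : (q' : ℝ) ≠ 0 := by exact_mod_cast hq'0
    rw [← hmdR]
    field_simp

lemma sum_norm_expSum_le_sum_reducedFractions (s : Finset ℕ) {m d q : ℕ} (hd : d ∣ m)
    (hm : m ≠ 0) (hq : q ≠ 0) (hqm : Nat.gcd q m = 1) :
    ∑ r ∈ range (d * q) with ¬ q ∣ r, ‖expSum s (r / (d * q))‖ ≤
      ∑ p ∈ reducedFractions m q, ‖expSum s (p.2 / (m * p.1))‖ := by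
  set T := {r ∈ range (d * q) | ¬ q ∣ r}
  have hspec : ∀ r ∈ T, reduceFraction m d q r ∈ reducedFractions m q ∧
      (r : ℝ) / (d * q) = (reduceFraction m d q r).2 / (m * (reduceFraction m d q r).1) :=
    fun r hr => by
      rw [mem_filter, mem_range] at hr
      exact reduceFraction_spec hd hm hq hqm hr.1 hr.2
  have hinj : Set.InjOn (reduceFraction m d q) T := fun r₁ h₁ r₂ h₂ h => by
    have hdq : (d * q : ℝ) ≠ 0 := by
      have := ne_zero_of_dvd_ne_zero hm hd
      positivity
    have h' : (r₁ : ℝ) / (d * q) = r₂ / (d * q) := by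
      rw [(hspec r₁ h₁).2, (hspec r₂ h₂).2, h]
    exact_mod_cast (div_left_inj' hdq).1 h'
  calc ∑ r ∈ T, ‖expSum s (r / (d * q))‖
      = ∑ r ∈ T, ‖expSum s ((reduceFraction m d q r).2 / (m * (reduceFraction m d q r).1))‖ :=
        sum_congr rfl fun r hr => by rw [(hspec r hr).2]
    _ = ∑ p ∈ T.image (reduceFraction m d q), ‖expSum s (p.2 / (m * p.1))‖ := by
        rw [sum_image hinj]
    _ ≤ _ := by
        apply sum_le_sum_of_subset_of_nonneg
        · exact image_subset_iff.2 fun r hr => (hspec r hr).1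
        · exact fun _ _ _ => norm_nonneg _

lemma abs_card_filter_mul_dvd_sub_le (s : Finset ℕ) {m d q : ℕ} (hd : d ∣ m)
    (hm : m ≠ 0) (hq : q ≠ 0) (hqm : Nat.gcd q m = 1) :
    |(#{a ∈ s | d * q ∣ a} : ℝ) - 1 / q * #{a ∈ s | d ∣ a}| ≤
      1 / q * ∑ p ∈ reducedFractions m q, ‖expSum s (p.2 / (m * p.1))‖ := by
  have hd0 : d ≠ 0 := ne_zero_of_dvd_ne_zero hm hd
  have hd1 : (1 : ℝ) ≤ d := by exact_mod_cast Nat.one_le_iff_ne_zero.2 hd0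
  calc |(#{a ∈ s | d * q ∣ a} : ℝ) - 1 / q * #{a ∈ s | d ∣ a}|
      = ‖(((#{a ∈ s | d * q ∣ a} : ℝ) - 1 / q * #{a ∈ s | d ∣ a} : ℝ) : ℂ)‖ := by
        rw [Complex.norm_real, Real.norm_eq_abs]
    _ = 1 / (d * q) * ‖∑ r ∈ range (d * q) with ¬ q ∣ r, expSum s (r / (d * q))‖ := by
        push_cast
        rw [card_filter_mul_dvd_sub_eq s hd0 hq, norm_mul]
        norm_cast
        simp
    _ ≤ 1 / (d * q) * ∑ p ∈ reducedFractions m q, ‖expSum s (p.2 / (m * p.1))‖ := by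
        gcongr
        exact (norm_sum_le _ _).trans (sum_norm_expSum_le_sum_reducedFractions s hd hm hq hqm)
    _ ≤ 1 / q * ∑ p ∈ reducedFractions m q, ‖expSum s (p.2 / (m * p.1))‖ := by
        have : (0 : ℝ) < q := by exact_mod_cast Nat.pos_of_ne_zero hq
        gcongr
        nlinarith

theorem abs_card_filter_dvd_and_coprime_sub_le (s : Finset ℕ) {m q : ℕ} (hm : m ≠ 0) (hq : q ≠ 0)
    (hqm : Nat.gcd q m = 1) :
    |(#{a ∈ s | q ∣ a ∧ Nat.gcd a m = 1} : ℝ) - 1 / q * #{a ∈ s | Nat.gcd a m = 1}| ≤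
      #m.divisors / q * ∑ p ∈ reducedFractions m q, ‖expSum s (p.2 / (m * p.1))‖ := by
  set B := ∑ p ∈ reducedFractions m q, ‖expSum s (p.2 / (m * p.1))‖
  have hcoprime : (#{a ∈ s | Nat.gcd a m = 1} : ℝ) =
      ∑ d ∈ m.divisors, (μ d : ℝ) * #{a ∈ s | d ∣ a} := by
    have h := card_filter_dvd_and_coprime_eq_sum_moebius s hm (Nat.gcd_one_left m)
    simp only [one_dvd, true_and, mul_one] at h
    exact_mod_cast h
  have hdvd : (#{a ∈ s | q ∣ a ∧ Nat.gcd a m = 1} : ℝ) =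
      ∑ d ∈ m.divisors, (μ d : ℝ) * #{a ∈ s | d * q ∣ a} := by
    exact_mod_cast card_filter_dvd_and_coprime_eq_sum_moebius s hm hqm
  calc |(#{a ∈ s | q ∣ a ∧ Nat.gcd a m = 1} : ℝ) - 1 / q * #{a ∈ s | Nat.gcd a m = 1}|
      = |∑ d ∈ m.divisors, (μ d : ℝ) * (#{a ∈ s | d * q ∣ a} - 1 / q * #{a ∈ s | d ∣ a})| := by
        rw [hdvd, hcoprime, mul_sum, ← sum_sub_distrib]
        congr 1
        exact sum_congr rfl fun d _ => by ring
    _ ≤ ∑ d ∈ m.divisors,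
          |(μ d : ℝ)| * |(#{a ∈ s | d * q ∣ a} : ℝ) - 1 / q * #{a ∈ s | d ∣ a}| := by
        simp only [← abs_mul]
        exact abs_sum_le_sum_abs _ _
    _ ≤ ∑ d ∈ m.divisors, 1 * (1 / q * B) := by
        refine sum_le_sum fun d hd => ?_
        gcongr
        · exact_mod_cast abs_moebius_le_one
        · exact abs_card_filter_mul_dvd_sub_le s (Nat.dvd_of_mem_divisors hd) hm hq hqm
    _ = #m.divisors / q * B := by
        rw [sum_const, nsmul_eq_mul]
        ring

lemma norm_expSum_A_eq_card_mul_FX (a₀ x : ℕ) (θ : ℝ) :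
    ‖expSum (A a₀ x) θ‖ = #(A a₀ x) * FX a₀ x θ := by
  by_cases h : #(A a₀ x) = 0
  · simp [card_eq_zero.1 h, expSum]
  · rw [FX, ← expSum]
    field_simp

theorem stmt_18 : ∃ C : ℝ, 0 < C ∧
    ∀ (x a₀ q : ℕ), a₀ ≤ 9 → 1 ≤ x → 0 < q → Nat.gcd q 10 = 1 →
      abs ((((A a₀ x).filter (fun a => q ∣ a ∧ Nat.gcd a 10 = 1)).card : ℝ)
          - (1 / (q : ℝ)) * (((A a₀ x).filter (fun a => Nat.gcd a 10 = 1)).card : ℝ))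
        ≤ C * (((A a₀ x).card : ℝ) / q) *
            ∑ q' ∈ q.divisors.filter (fun d => 1 < d),
              ∑ b ∈ (Finset.Icc 1 (10 * q')).filter (fun b => Nat.gcd b q' = 1),
                FX a₀ x ((b : ℝ) / (10 * (q' : ℝ))) := by
  refine ⟨4, by norm_num, fun x a₀ q _ _ hq hq10 => ?_⟩
  have hbound := abs_card_filter_dvd_and_coprime_sub_le (A a₀ x) (m := 10) (by norm_num) hq.ne' hq10
  have hcard : #(Nat.divisors 10) = 4 := by decide
  refine hbound.trans (le_of_eq ?_)
  simp only [hcard, reducedFractions, sum_sigma, norm_expSum_A_eq_card_mul_FX, ← mul_sum]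
  push_cast
  ring
end
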